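/- For y → +∞, ∫_ℝ H_{0,1}(x)² H_{0,1}'(x) H_{-1,0}(x+y) dx = -e^{-√2 y}(1/3 + o(1)). In particular, there exist constants 0 < c < C such that for all sufficiently large y, c·e^{-√2 y} ≤ -∫_ℝ H_{0,1}² H_{0,1}' H_{-1,0}(·+y) dx ≤ C·e^{-√2 y}. -/

import Mathlib

open Real MeasureTheory Filter Topology

noncomputable def H01 : ℝ → ℝ := fun x => Real.exp (Real.sqrt 2 * x) / Real.sqrt (1 + Real.exp (2 * Real.sqrt 2 * x))

noncomputable def Hm10 : ℝ → ℝ := fun x => -(Real.exp (-(Real.sqrt 2) * x) / Real.sqrt (1 + Real.exp (-(2 * Real.sqrt 2) * x)))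

/-
The profiles are reflections of each other: `H₋₁₀(t) = -H₀₁(-t)`, `H₀₁(-x) = e^{-√2 x} H₀₁(x)`
and `H₀₁' = √2 H₀₁(x) H₀₁(-x)²`. Hence the integrand equals `-e^{-√2 y} w(x) H₀₁(x + y)` with the
nonnegative weight `w(x) = √2 H₀₁(x)² H₀₁(-x)³ = (d/dx) (-H₀₁(-x)³ / 3)`, of total mass `1/3`.
Since `0 < H₀₁ ≤ 1` and `H₀₁(x + y) → 1` as `y → ∞`, dominated convergence gives the limit
`-1/3`, and the two-sided bounds follow from it.
-/

theorem integrable_of_hasDerivAt_of_nonneg {g g' : ℝ → ℝ} {m n : ℝ}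
    (hderiv : ∀ x, HasDerivAt g (g' x) x) (hg' : ∀ x, 0 ≤ g' x)
    (hbot : Tendsto g atBot (𝓝 m)) (htop : Tendsto g atTop (𝓝 n)) : Integrable g' := by
  rw [← integrableOn_univ, ← Set.Iic_union_Ioi (a := (0 : ℝ)), integrableOn_union]
  refine ⟨?_, integrableOn_Ioi_deriv_of_nonneg' (fun x _ => hderiv x) (fun x _ => hg' x) htop⟩
  rw [← (Measure.measurePreserving_neg (volume : Measure ℝ)).integrableOn_comp_preimage
    (Homeomorph.neg ℝ).measurableEmbedding]
  simp only [Set.neg_preimage, Set.neg_Iic, neg_zero]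
  -- on `(-∞, 0]` reflect: `x ↦ -g (-x)` has derivative `g' (-x)` and a limit at `+∞`
  rw [integrableOn_Ici_iff_integrableOn_Ioi]
  refine integrableOn_Ioi_deriv_of_nonneg'
    (g := fun x => -g (-x)) (fun x _ => ?_) (fun x _ => hg' _)
    (hbot.comp tendsto_neg_atTop_atBot).neg
  have h := ((hderiv (-x)).comp x (hasDerivAt_neg x)).neg
  rwa [mul_neg_one, neg_neg] at h

theorem tendsto_integral_mul_comp_add_atTop {f g : ℝ → ℝ} {C L : ℝ} (hf : Integrable f)
    (hg : Measurable g) (hgC : ∀ x, ‖g x‖ ≤ C) (hgL : Tendsto g atTop (𝓝 L)) :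
    Tendsto (fun y => ∫ x, f x * g (x + y)) atTop (𝓝 ((∫ x, f x) * L)) := by
  rw [← integral_mul_const]
  refine tendsto_integral_filter_of_dominated_convergence (fun x => ‖f x‖ * C)
    (Eventually.of_forall fun y =>
      hf.aestronglyMeasurable.mul (hg.comp (measurable_add_const y)).aestronglyMeasurable)
    (Eventually.of_forall fun y => ae_of_all _ fun x => ?_) (hf.norm.mul_const C)
    (ae_of_all _ fun x => ?_)
  · rw [norm_mul]
    exact mul_le_mul_of_nonneg_left (hgC _) (norm_nonneg _)
  · exact (hgL.comp (tendsto_atTop_add_const_left _ x tendsto_id)).const_mul (f x)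

lemma exists_bounds_of_tendsto {α : Type*} {l : Filter α} {J e : α → ℝ} {L : ℝ}
    (hJ : Tendsto J l (𝓝 L)) (hL : 0 < L) (he : ∀ a, 0 ≤ e a) :
    ∃ c C : ℝ, 0 < c ∧ c < C ∧ ∀ᶠ a in l, c * e a ≤ e a * J a ∧ e a * J a ≤ C * e a := by
  refine ⟨L / 2, 2 * L, by positivity, by linarith, ?_⟩
  filter_upwards [hJ.eventually (Ioo_mem_nhds (half_lt_self hL) (by linarith : L < 2 * L))]
    with a ha
  constructor <;> nlinarith [he a, ha.1, ha.2]

lemma H01_neg_eq_inv_sqrt (x : ℝ) : H01 (-x) = (√(1 + exp (2 * √2 * x)))⁻¹ := by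
  set E := exp (√2 * x) with hE_def
  have hE : 0 < E := exp_pos _
  have h2 : exp (2 * √2 * x) = E ^ 2 := by rw [hE_def, ← exp_nat_mul]; ring_nf
  have hsqrt : √(1 + E ^ 2) = E * √(1 + E⁻¹ ^ 2) := by
    rw [← sqrt_sq hE.le, ← sqrt_mul (sq_nonneg _), sqrt_sq hE.le]
    congr 1
    field_simp
    ring
  simp only [H01, mul_neg, exp_neg, ← hE_def, h2, hsqrt]
  rw [inv_pow]
  field_simp

lemma Hm10_eq_neg_H01_neg (t : ℝ) : Hm10 t = -H01 (-t) := by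
  simp only [Hm10, H01]; ring_nf

lemma H01_eq_exp_mul_H01_neg (x : ℝ) : H01 x = exp (√2 * x) * H01 (-x) := by
  rw [H01_neg_eq_inv_sqrt, H01, div_eq_mul_inv]

lemma H01_neg_eq_exp_mul_H01 (x : ℝ) : H01 (-x) = exp (-√2 * x) * H01 x := by
  rw [H01_eq_exp_mul_H01_neg x, ← mul_assoc, ← exp_add, neg_mul, neg_add_cancel, exp_zero,
    one_mul]

lemma H01_pos (x : ℝ) : 0 < H01 x := by unfold H01; positivity

lemma H01_sq_add_H01_neg_sq (x : ℝ) : H01 x ^ 2 + H01 (-x) ^ 2 = 1 := by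
  have hg : 0 < 1 + exp (2 * √2 * x) := by positivity
  have h2 : exp (2 * √2 * x) = exp (√2 * x) ^ 2 := by rw [← exp_nat_mul]; ring_nf
  rw [H01_neg_eq_inv_sqrt, H01, div_pow, inv_pow, sq_sqrt hg.le, ← h2]
  field_simp
  ring

lemma H01_le_one (x : ℝ) : H01 x ≤ 1 := by
  nlinarith [H01_sq_add_H01_neg_sq x, H01_pos x, sq_nonneg (H01 (-x))]

lemma hasDerivAt_H01 (x : ℝ) : HasDerivAt H01 (√2 * H01 x * H01 (-x) ^ 2) x := by
  have hg : 0 < 1 + exp (2 * √2 * x) := by positivity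
  have hS : 0 < √(1 + exp (2 * √2 * x)) := sqrt_pos.2 hg
  have hnum : HasDerivAt (fun x => exp (√2 * x)) (√2 * exp (√2 * x)) x := by
    simpa [mul_comm] using ((hasDerivAt_id x).const_mul √2).exp
  have hden : HasDerivAt (fun x => √(1 + exp (2 * √2 * x)))
      (2 * √2 * exp (2 * √2 * x) / (2 * √(1 + exp (2 * √2 * x)))) x := by
    refine HasDerivAt.sqrt ?_ hg.ne'
    simpa [mul_comm] using (((hasDerivAt_id x).const_mul (2 * √2)).exp).const_add 1
  refine (hnum.div hden hS.ne').congr_deriv ?_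
  have h2 : exp (2 * √2 * x) = exp (√2 * x) ^ 2 := by rw [← exp_nat_mul]; ring_nf
  rw [H01_neg_eq_inv_sqrt, H01, inv_pow, sq_sqrt hg.le, h2]
  field_simp
  rw [sq_sqrt (by positivity)]
  ring

lemma continuous_H01 : Continuous H01 := by
  unfold H01
  exact Continuous.div (by fun_prop) (by fun_prop) fun x => (sqrt_pos.2 (by positivity)).ne'

lemma tendsto_H01_atBot : Tendsto H01 atBot (𝓝 0) := by
  have hexp : Tendsto (fun x : ℝ => exp (√2 * x)) atBot (𝓝 0) :=
    tendsto_exp_atBot.comp (tendsto_id.const_mul_atBot (by positivity))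
  refine squeeze_zero (fun x => (H01_pos x).le) (fun x => ?_) hexp
  rw [H01_eq_exp_mul_H01_neg x]
  exact mul_le_of_le_one_right (exp_pos _).le (H01_le_one _)

lemma tendsto_H01_atTop : Tendsto H01 atTop (𝓝 1) := by
  have hlim : Tendsto (fun x : ℝ => 1 + exp (2 * √2 * -x)) atTop (𝓝 1) := by
    have : Tendsto (fun x : ℝ => 2 * √2 * -x) atTop atBot :=
      tendsto_neg_atTop_atBot.const_mul_atBot (by positivity)
    simpa using (tendsto_exp_atBot.comp this).const_add 1
  convert hlim.sqrt.inv₀ (by simp) using 1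
  · ext x
    rw [← H01_neg_eq_inv_sqrt, neg_neg]
  · simp

noncomputable def weight (x : ℝ) : ℝ := √2 * H01 x ^ 2 * H01 (-x) ^ 3

lemma weight_nonneg (x : ℝ) : 0 ≤ weight x :=
  mul_nonneg (mul_nonneg (sqrt_nonneg 2) (sq_nonneg _)) (pow_nonneg (H01_pos _).le 3)

lemma hasDerivAt_weight_primitive (x : ℝ) :
    HasDerivAt (fun x => -H01 (-x) ^ 3 / 3) (weight x) x := by
  have h := ((hasDerivAt_H01 (-x)).comp x (hasDerivAt_neg x)).pow 3
  refine (h.neg.div_const 3).congr_deriv ?_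
  simp only [weight, neg_neg, Function.comp_apply]
  ring

lemma tendsto_weight_primitive_atBot :
    Tendsto (fun x => -H01 (-x) ^ 3 / 3) atBot (𝓝 (-1 ^ 3 / 3)) :=
  (((tendsto_H01_atTop.comp tendsto_neg_atBot_atTop).pow 3).neg).div_const 3

lemma tendsto_weight_primitive_atTop :
    Tendsto (fun x => -H01 (-x) ^ 3 / 3) atTop (𝓝 (-0 ^ 3 / 3)) :=
  (((tendsto_H01_atBot.comp tendsto_neg_atTop_atBot).pow 3).neg).div_const 3

lemma integrable_weight : Integrable weight :=
  integrable_of_hasDerivAt_of_nonneg hasDerivAt_weight_primitive weight_nonneg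
    tendsto_weight_primitive_atBot tendsto_weight_primitive_atTop

lemma integral_weight : ∫ x, weight x = 1 / 3 := by
  rw [integral_of_hasDerivAt_of_tendsto hasDerivAt_weight_primitive integrable_weight
    tendsto_weight_primitive_atBot tendsto_weight_primitive_atTop]
  norm_num

lemma integrand_eq (x y : ℝ) :
    H01 x ^ 2 * deriv H01 x * Hm10 (x + y) = -(exp (-√2 * y) * (weight x * H01 (x + y))) := by
  rw [(hasDerivAt_H01 x).deriv, Hm10_eq_neg_H01_neg, H01_neg_eq_exp_mul_H01 (x + y),
    weight, mul_add, exp_add]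
  linear_combination (√2 * H01 x ^ 2 * H01 (-x) ^ 2 * exp (-√2 * y) * H01 (x + y)) *
    H01_neg_eq_exp_mul_H01 x

theorem stmt16 :
    Tendsto (fun y : ℝ => (∫ x : ℝ, (H01 x)^2 * deriv H01 x * Hm10 (x + y)) / Real.exp (-(Real.sqrt 2) * y))
      atTop (𝓝 (-(1/3))) ∧
    ∃ c C : ℝ, 0 < c ∧ c < C ∧
      ∀ᶠ y in atTop,
        c * Real.exp (-(Real.sqrt 2) * y) ≤ -(∫ x : ℝ, (H01 x)^2 * deriv H01 x * Hm10 (x + y)) ∧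
        -(∫ x : ℝ, (H01 x)^2 * deriv H01 x * Hm10 (x + y)) ≤ C * Real.exp (-(Real.sqrt 2) * y) := by
  have hI (y : ℝ) : ∫ x, H01 x ^ 2 * deriv H01 x * Hm10 (x + y) =
      -(exp (-√2 * y) * ∫ x, weight x * H01 (x + y)) := by
    simp_rw [integrand_eq, integral_neg, integral_const_mul]
  have hJ : Tendsto (fun y => ∫ x, weight x * H01 (x + y)) atTop (𝓝 (1 / 3)) := by
    simpa [integral_weight] using tendsto_integral_mul_comp_add_atTop integrable_weight
      continuous_H01.measurable (fun x => (norm_of_nonneg (H01_pos x).le).trans_le (H01_le_one x))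
      tendsto_H01_atTop
  refine ⟨hJ.neg.congr fun y => ?_, ?_⟩
  · rw [hI, neg_div, mul_div_cancel_left₀ _ (exp_pos _).ne']
  · obtain ⟨c, C, hc, hcC, h⟩ :=
      exists_bounds_of_tendsto hJ (by norm_num) fun y => (exp_pos _).le
    exact ⟨c, C, hc, hcC, by simpa only [hI, neg_neg] using h⟩
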